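/- Let ε > 0 and a₀ ∈ ℝ, define u(t) = 4ε·e^{3ε²t} + a₀²·(e^{3ε²t} − 1), a(t) = 2·√ε·a₀/√(u(t)), and φ(t) = −(3/16)·ε²·ln(u(t)) + (9/16)·ε⁴·t − (3/16)·ε²·a₀²/u(t). Then for all t ≥ 0, φ'(t) = (9/256)·ε²·a(t)⁴. -/

import Mathlib

/-!
The function `u(t) = 4ε e^{3ε²t} + a₀²(e^{3ε²t} − 1)` solves the linear equation
`u' = 3ε²(u + a₀²)`. Differentiating `φ = −α log u + αk t − α a₀²/u` (with `α = 3ε²/16`,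
`k = 3ε²`) along such a `u`, the terms of order `1/u` cancel and `φ' = αk a₀⁴/u²`,
which is `(9/256)ε² a⁴` because `a⁴ = 16ε² a₀⁴/u²`.
-/

open Real

lemma hasDerivAt_mul_exp_add_mul_exp_sub_one (c b k t : ℝ) :
    HasDerivAt (fun s => c * exp (k * s) + b * (exp (k * s) - 1))
      (k * (c * exp (k * t) + b * (exp (k * t) - 1) + b)) t := by
  have hexp : HasDerivAt (fun s => exp (k * s)) (exp (k * t) * k) t := by
    simpa using ((hasDerivAt_id t).const_mul k).exp
  exact ((hexp.const_mul c).add ((hexp.sub_const 1).const_mul b)).congr_deriv (by ring)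

lemma mul_exp_add_mul_exp_sub_one_pos {c b k t : ℝ} (hc : 0 < c) (hb : 0 ≤ b) (hk : 0 ≤ k)
    (ht : 0 ≤ t) : 0 < c * exp (k * t) + b * (exp (k * t) - 1) := by
  have h1 : 1 ≤ exp (k * t) := one_le_exp (mul_nonneg hk ht)
  nlinarith [exp_pos (k * t)]

lemma hasDerivAt_neg_log_add_mul_sub_div {u : ℝ → ℝ} {α k b t : ℝ}
    (hu : HasDerivAt u (k * (u t + b)) t) (hu0 : u t ≠ 0) :
    HasDerivAt (fun s => -α * log (u s) + α * k * s - α * b / u s)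
      (α * k * b ^ 2 / u t ^ 2) t := by
  have hlin : HasDerivAt (fun s => α * k * s) (α * k) t := by
    simpa using (hasDerivAt_id t).const_mul (α * k)
  refine ((((hu.log hu0).const_mul (-α)).add hlin).sub
    ((hasDerivAt_const t (α * b)).div hu hu0)).congr_deriv ?_
  field_simp
  ring

lemma sqrt_pow_four {x : ℝ} (hx : 0 ≤ x) : √x ^ 4 = x ^ 2 := by
  rw [show 4 = 2 * 2 from rfl, pow_mul, sq_sqrt hx]

/-- The multiple-scales phase
`φ(t) = −(3/16)ε²·ln u(t) + (9/16)ε⁴t − (3/16)ε²a₀²/u(t)`,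
with `u(t) = 4ε·e^{3ε²t} + a₀²(e^{3ε²t} − 1)` and amplitude
`a(t) = 2√ε·a₀/√(u(t))`, satisfies `φ' = (9/256)ε²a⁴`. -/
theorem stmt13 (ε a₀ : ℝ) (hε : 0 < ε) :
    let u : ℝ → ℝ := fun t => 4*ε*Real.exp (3*ε^2*t) + a₀^2*(Real.exp (3*ε^2*t) - 1)
    let a : ℝ → ℝ := fun t => 2 * Real.sqrt ε * a₀ / Real.sqrt (u t)
    let φ : ℝ → ℝ := fun t =>
      -(3/16)*ε^2*Real.log (u t) + (9/16)*ε^4*t - (3/16)*ε^2*a₀^2 / u t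
    ∀ t : ℝ, 0 ≤ t → deriv φ t = (9/256) * ε^2 * (a t)^4 := by
  intro u a φ t ht
  have hu_pos : 0 < u t :=
    mul_exp_add_mul_exp_sub_one_pos (by positivity) (sq_nonneg a₀) (by positivity) ht
  have hφ : HasDerivAt φ ((3/16*ε^2) * (3*ε^2) * (a₀^2)^2 / u t ^ 2) t := by
    convert hasDerivAt_neg_log_add_mul_sub_div
      (hasDerivAt_mul_exp_add_mul_exp_sub_one (4*ε) (a₀^2) (3*ε^2) t) hu_pos.ne' using 1
    ext s
    ring
  have ha : a t ^ 4 = 16 * ε^2 * a₀^4 / u t ^ 2 := by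
    simp only [a, div_pow, mul_pow, sqrt_pow_four hε.le, sqrt_pow_four hu_pos.le]
    ring
  rw [hφ.deriv, ha]
  ring
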